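/- Let f : E^r → ℚ be a GP-function, let B₀ = (b₁,…,b_r) satisfy f(B₀) ≠ 0, and let v_e ∈ ℚ^r be defined by (v_e)_i = f(b₁,…,b_{i−1},e,b_{i+1},…,b_r) for e ∈ E. Then a tuple (a₁,…,a_r) ∈ E^r satisfies f(a₁,…,a_r) ≠ 0 if and only if the vectors v_{a₁},…,v_{a_r} are linearly independent in ℚ^r. -/
import Mathlib


open Finset

/-- An alternating function: applying a permutation multiplies the value by its sign. -/
def IsAlt {E : Type*} {r : ℕ} (f : (Fin r → E) → ℚ) : Prop :=
  ∀ (σ : Equiv.Perm (Fin r)) (x : Fin r → E),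
    f (x ∘ σ) = ((Equiv.Perm.sign σ : ℤ) : ℚ) * f x

/-- The Grassmann–Plücker relation for a function of rank `r + 1`. -/
def IsGP {E : Type*} {r : ℕ} (f : (Fin (r + 1) → E) → ℚ) : Prop :=
  ∀ (x : Fin r → E) (y : Fin (r + 2) → E),
    ∑ i : Fin (r + 2), (-1 : ℚ) ^ (i : ℕ) * f (Fin.cons (y i) x) * f (y ∘ i.succAbove) = 0

lemma alt_eq_zero {E : Type*} {r : ℕ} {f : (Fin r → E) → ℚ} (halt : IsAlt f)
    {x : Fin r → E} {i j : Fin r} (hij : i ≠ j) (hx : x i = x j) : f x = 0 := by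
  have h := halt (Equiv.swap i j) x
  have hxs : x ∘ (Equiv.swap i j) = x := by
    funext k
    rcases eq_or_ne k i with rfl | hki
    · simpa using hx.symm
    rcases eq_or_ne k j with rfl | hkj
    · simpa using hx
    · simp [Equiv.swap_apply_of_ne_of_ne hki hkj]
  rw [hxs, Equiv.Perm.sign_swap hij] at h
  push_cast at h
  linarith

lemma alt_rot {E : Type*} {r : ℕ} {f : (Fin (r+1) → E) → ℚ} (halt : IsAlt f)
    (z : Fin (r+1) → E) (p : Fin (r+1)) :
    f (Fin.cons (z p) (z ∘ p.succAbove)) = (-1 : ℚ) ^ (p : ℕ) * f z := by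
  have h := halt p.cycleRange.symm z
  have hz : z ∘ ⇑p.cycleRange.symm = Fin.cons (z p) (z ∘ p.succAbove) := by
    funext i
    refine Fin.cases ?_ ?_ i <;> simp
  have hs : Equiv.Perm.sign p.cycleRange.symm = (-1) ^ (p : ℕ) := by
    rw [Equiv.Perm.sign_symm, Fin.sign_cycleRange]
  rw [hz, hs] at h
  rw [h]
  push_cast
  ring

lemma GP_star {E : Type*} {r : ℕ} {f : (Fin (r+1) → E) → ℚ} (halt : IsAlt f) (hGP : IsGP f)
    (B₀ : Fin (r+1) → E) (e : E) (x : Fin r → E) :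
    f B₀ * f (Fin.cons e x) =
      ∑ k : Fin (r+1), f (Function.update B₀ k e) * f (Fin.cons (B₀ k) x) := by
  have h := hGP x (Fin.cons e B₀)
  rw [Fin.sum_univ_succ] at h
  have h0 : (Fin.cons e B₀ : Fin (r+2) → E) ∘ (0 : Fin (r+2)).succAbove = B₀ := by
    funext j; simp [Fin.succAbove_zero]
  have hterm : ∀ k : Fin (r+1),
      (-1 : ℚ) ^ ((k.succ : Fin (r+2)) : ℕ) * f (Fin.cons ((Fin.cons e B₀ : Fin (r+2) → E) k.succ) x) *
        f ((Fin.cons e B₀ : Fin (r+2) → E) ∘ k.succ.succAbove)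
      = -(f (Function.update B₀ k e) * f (Fin.cons (B₀ k) x)) := by
    intro k
    have hc : (Fin.cons e B₀ : Fin (r+2) → E) ∘ k.succ.succAbove
        = Fin.cons ((Function.update B₀ k e) k)
            ((Function.update B₀ k e) ∘ k.succAbove) := by
      funext j
      refine Fin.cases ?_ ?_ j
      · simp [Fin.succ_succAbove_zero]
      · intro i
        simp only [Function.comp_apply, Fin.succ_succAbove_succ, Fin.cons_succ]
        rw [Function.update_of_ne (Fin.succAbove_ne k i)]
    rw [hc, alt_rot halt (Function.update B₀ k e) k]
    simp only [Fin.cons_succ, Fin.val_succ, Function.update_self]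
    ring_nf
    rw [mul_comm (k:ℕ) 2, pow_mul]
    norm_num
  rw [Finset.sum_congr rfl (fun k _ => hterm k)] at h
  simp only [Fin.cons_zero, h0, Fin.val_zero, pow_zero, one_mul, Finset.sum_neg_distrib] at h
  linarith [h]

lemma GP_starp {E : Type*} {r : ℕ} {f : (Fin (r+1) → E) → ℚ} (halt : IsAlt f) (hGP : IsGP f)
    (B₀ : Fin (r+1) → E) (z : Fin (r+1) → E) (p : Fin (r+1)) :
    f B₀ * f z =
      ∑ k : Fin (r+1), f (Function.update B₀ k (z p)) * f (Function.update z p (B₀ k)) := by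
  have h := GP_star halt hGP B₀ (z p) (z ∘ p.succAbove)
  rw [alt_rot halt z p] at h
  have hterm : ∀ k : Fin (r+1),
      f (Function.update B₀ k (z p)) * f (Fin.cons (B₀ k) (z ∘ p.succAbove))
      = (-1 : ℚ) ^ (p : ℕ) * (f (Function.update B₀ k (z p)) * f (Function.update z p (B₀ k))) := by
    intro k
    have hc : (Fin.cons (B₀ k) (z ∘ p.succAbove) : Fin (r+1) → E)
        = Fin.cons ((Function.update z p (B₀ k)) p) ((Function.update z p (B₀ k)) ∘ p.succAbove) := by
      have h1 : (Function.update z p (B₀ k)) p = B₀ k := Function.update_self _ _ _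
      have h2 : (Function.update z p (B₀ k)) ∘ p.succAbove = z ∘ p.succAbove := by
        funext j
        exact Function.update_of_ne (Fin.succAbove_ne p j) _ _
      rw [h1, h2]
    rw [hc, alt_rot halt (Function.update z p (B₀ k)) p]
    ring
  rw [Finset.sum_congr rfl (fun k _ => hterm k), ← Finset.mul_sum] at h
  have hne : ((-1 : ℚ) ^ (p : ℕ)) ≠ 0 := pow_ne_zero _ (by norm_num)
  exact mul_left_cancel₀ hne (by linear_combination h)

lemma GP_expand {E : Type*} {r : ℕ} {f : (Fin (r+1) → E) → ℚ} (halt : IsAlt f) (hGP : IsGP f)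
    (B₀ a : Fin (r+1) → E) :
    ∀ m (hm : m ≤ r + 1),
      f B₀ ^ m * f a = ∑ k : Fin m → Fin (r+1),
        (∏ j : Fin m, f (Function.update B₀ (k j) (a (Fin.castLE hm j)))) *
          f (fun i => if h : (i : ℕ) < m then B₀ (k ⟨(i : ℕ), h⟩) else a i) := by
  intro m
  induction m with
  | zero =>
    intro hm
    have : ∀ k : Fin 0 → Fin (r+1),
        (fun i : Fin (r+1) => if h : (i : ℕ) < 0 then B₀ (k ⟨(i : ℕ), h⟩) else a i) = a := by
      intro k; funext i; simp
    simp [this]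
  | succ m ih =>
    intro hm
    have hm' : m ≤ r + 1 := Nat.le_of_succ_le hm
    set p : Fin (r+1) := ⟨m, hm⟩ with hp
    -- reindex the sum via snoc
    have hbij : Function.Bijective
        (fun kc : (Fin m → Fin (r+1)) × Fin (r+1) =>
          (Fin.snoc kc.1 kc.2 : Fin (m+1) → Fin (r+1))) := by
      constructor
      · rintro ⟨k1, c1⟩ ⟨k2, c2⟩ h
        have hc : c1 = c2 := by
          have := congrFun h (Fin.last m); simpa using this
        have hk : k1 = k2 := by
          funext j
          have := congrFun h (Fin.castSucc j); simpa using this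
        simp [hc, hk]
      · intro k'
        exact ⟨(Fin.init k', k' (Fin.last m)), Fin.snoc_init_self k'⟩
    rw [← Fintype.sum_bijective _ hbij _ _ (fun kc => rfl), Fintype.sum_prod_type]
    -- now simplify each (k, c) term
    have hterm : ∀ (k : Fin m → Fin (r+1)) (c : Fin (r+1)),
        (∏ j : Fin (m+1),
            f (Function.update B₀ ((Fin.snoc k c : Fin (m+1) → Fin (r+1)) j)
              (a (Fin.castLE hm j)))) *
          f (fun i : Fin (r+1) => if h : (i : ℕ) < m + 1
              then B₀ ((Fin.snoc k c : Fin (m+1) → Fin (r+1)) ⟨(i : ℕ), h⟩) else a i)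
        = (∏ j : Fin m, f (Function.update B₀ (k j) (a (Fin.castLE hm' j)))) *
            (f (Function.update B₀ c
                ((fun i : Fin (r+1) => if h : (i : ℕ) < m then B₀ (k ⟨(i : ℕ), h⟩) else a i) p)) *
             f (Function.update
                (fun i : Fin (r+1) => if h : (i : ℕ) < m then B₀ (k ⟨(i : ℕ), h⟩) else a i)
                p (B₀ c))) := by
      intro k c
      have hgp : (fun i : Fin (r+1) => if h : (i : ℕ) < m
          then B₀ (k ⟨(i : ℕ), h⟩) else a i) p = a p := by
        simp [hp]
      have hprod : (∏ j : Fin (m+1),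
          f (Function.update B₀ ((Fin.snoc k c : Fin (m+1) → Fin (r+1)) j)
            (a (Fin.castLE hm j))))
          = (∏ j : Fin m, f (Function.update B₀ (k j) (a (Fin.castLE hm' j)))) *
              f (Function.update B₀ c (a p)) := by
        rw [Fin.prod_univ_castSucc]
        congr 1
        · apply Finset.prod_congr rfl
          intro j _
          rw [Fin.snoc_castSucc]
          rfl
        · rw [Fin.snoc_last]
          rfl
      have hfun : (fun i : Fin (r+1) => if h : (i : ℕ) < m + 1
            then B₀ ((Fin.snoc k c : Fin (m+1) → Fin (r+1)) ⟨(i : ℕ), h⟩) else a i)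
          = Function.update
              (fun i : Fin (r+1) => if h : (i : ℕ) < m then B₀ (k ⟨(i : ℕ), h⟩) else a i)
              p (B₀ c) := by
        funext i
        rcases lt_trichotomy (i : ℕ) m with hlt | heq | hgt
        · have hip : i ≠ p := by
            intro hip; rw [hip] at hlt; simp [hp] at hlt
          rw [Function.update_of_ne hip, dif_pos (Nat.lt_succ_of_lt hlt), dif_pos hlt]
          have : (⟨(i : ℕ), Nat.lt_succ_of_lt hlt⟩ : Fin (m+1))
              = Fin.castSucc ⟨(i : ℕ), hlt⟩ := rfl
          rw [this, Fin.snoc_castSucc]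
        · have hip : i = p := by
            apply Fin.ext; simp [hp, heq]
          rw [hip, Function.update_self, dif_pos (by simp [hp] : ((p : Fin (r+1)) : ℕ) < m + 1)]
          have : (⟨((p : Fin (r+1)) : ℕ), by simp [hp]⟩ : Fin (m+1)) = Fin.last m := by
            apply Fin.ext; simp [hp]
          rw [this, Fin.snoc_last]
        · have hip : i ≠ p := by
            intro hip; rw [hip] at hgt; simp [hp] at hgt
          rw [Function.update_of_ne hip, dif_neg (by omega), dif_neg (by omega)]
      rw [hprod, hfun, hgp]
      ring
    rw [Finset.sum_congr rfl (fun k _ => Finset.sum_congr rfl (fun c _ => hterm k c))]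
    have hinner : ∀ k : Fin m → Fin (r+1),
        ∑ c : Fin (r+1),
          (∏ j : Fin m, f (Function.update B₀ (k j) (a (Fin.castLE hm' j)))) *
            (f (Function.update B₀ c
                ((fun i : Fin (r+1) => if h : (i : ℕ) < m then B₀ (k ⟨(i : ℕ), h⟩) else a i) p)) *
             f (Function.update
                (fun i : Fin (r+1) => if h : (i : ℕ) < m then B₀ (k ⟨(i : ℕ), h⟩) else a i)
                p (B₀ c)))
        = (∏ j : Fin m, f (Function.update B₀ (k j) (a (Fin.castLE hm' j)))) *
            (f B₀ * f (fun i : Fin (r+1) => if h : (i : ℕ) < m then B₀ (k ⟨(i : ℕ), h⟩) else a i)) := by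
      intro k
      rw [← Finset.mul_sum]
      congr 1
      exact (GP_starp halt hGP B₀
        (fun i : Fin (r+1) => if h : (i : ℕ) < m then B₀ (k ⟨(i : ℕ), h⟩) else a i) p).symm
    rw [Finset.sum_congr rfl (fun k _ => hinner k)]
    have : ∀ k : Fin m → Fin (r+1),
        (∏ j : Fin m, f (Function.update B₀ (k j) (a (Fin.castLE hm' j)))) *
          (f B₀ * f (fun i : Fin (r+1) => if h : (i : ℕ) < m then B₀ (k ⟨(i : ℕ), h⟩) else a i))
        = f B₀ * ((∏ j : Fin m, f (Function.update B₀ (k j) (a (Fin.castLE hm' j)))) *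
            f (fun i : Fin (r+1) => if h : (i : ℕ) < m then B₀ (k ⟨(i : ℕ), h⟩) else a i)) := by
      intro k; ring
    rw [Finset.sum_congr rfl (fun k _ => this k), ← Finset.mul_sum, ← ih hm']
    ring


/-- The nonvanishing tuples of a GP-function are exactly the linearly independent
families of the associated vectors `v_e = (f (B₀ with e in slot i))_i`. -/
theorem GP_nonzero_iff_linearIndependent {E : Type*} {r : ℕ}
    (f : (Fin (r + 1) → E) → ℚ)
    (halt : IsAlt f) (hGP : IsGP f) (B₀ : Fin (r + 1) → E) (hB₀ : f B₀ ≠ 0)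
    (a : Fin (r + 1) → E) :
    f a ≠ 0 ↔ LinearIndependent ℚ
      (fun j : Fin (r + 1) => fun i : Fin (r + 1) =>
        f (Function.update B₀ i (a j))) := by
  classical
  set M : Matrix (Fin (r+1)) (Fin (r+1)) ℚ :=
    Matrix.of fun j i => f (Function.update B₀ i (a j)) with hM
  have expand := GP_expand halt hGP B₀ a (r+1) le_rfl
  have h1 : ∀ k : Fin (r+1) → Fin (r+1),
      (fun i : Fin (r+1) => if h : (i : ℕ) < r + 1 then B₀ (k ⟨(i : ℕ), h⟩) else a i)
        = B₀ ∘ k := by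
    intro k; funext i
    rw [dif_pos i.isLt]
    rfl
  have key : f B₀ ^ (r+1) * f a
      = ∑ k : Fin (r+1) → Fin (r+1), (∏ j, M j (k j)) * f (B₀ ∘ k) := by
    rw [expand]
    refine Finset.sum_congr rfl fun k _ => ?_
    rw [h1 k]
    rfl
  have h0 : ∀ k ∈ (Finset.univ : Finset (Fin (r+1) → Fin (r+1))),
      k ∉ Finset.univ.filter Function.Bijective → (∏ j, M j (k j)) * f (B₀ ∘ k) = 0 := by
    intro k _ hk
    have hnb : ¬ Function.Bijective k := by simpa using hk
    have hni : ¬ Function.Injective k := fun h => hnb (Finite.injective_iff_bijective.mp h)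
    rw [Function.Injective] at hni
    push_neg at hni
    obtain ⟨i, j, hkij, hij⟩ := hni
    have : f (B₀ ∘ k) = 0 :=
      alt_eq_zero halt hij (by simp only [Function.comp_apply, hkij])
    rw [this, mul_zero]
  have hsub := Finset.sum_subset (Finset.filter_subset Function.Bijective Finset.univ) h0
  have hbijsum : ∑ k ∈ Finset.univ.filter Function.Bijective,
        (∏ j, M j (k j)) * f (B₀ ∘ k)
      = ∑ σ : Equiv.Perm (Fin (r+1)), (∏ j, M j (σ j)) * f (B₀ ∘ ⇑σ) :=
    Finset.sum_bij (fun k hk => Equiv.ofBijective k (Finset.mem_filter.1 hk).2)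
      (fun _ _ => Finset.mem_univ _) (fun _ _ _ _ h => by injection h)
      (fun σ _ => ⟨⇑σ, Finset.mem_filter.2 ⟨Finset.mem_univ _, σ.bijective⟩,
        Equiv.coe_fn_injective rfl⟩)
      (fun _ _ => rfl)
  have hsign : ∀ σ : Equiv.Perm (Fin (r+1)),
      (∏ j, M j (σ j)) * f (B₀ ∘ ⇑σ)
        = ((Equiv.Perm.sign σ : ℤ) : ℚ) * (∏ j, M j (σ j)) * f B₀ := by
    intro σ
    rw [halt σ B₀]
    ring
  have hdet : M.det = ∑ σ : Equiv.Perm (Fin (r+1)),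
      ((Equiv.Perm.sign σ : ℤ) : ℚ) * ∏ j, M j (σ j) := by
    rw [← Matrix.det_transpose, Matrix.det_apply']
    rfl
  have key2 : f B₀ ^ (r+1) * f a = M.det * f B₀ := by
    rw [key, ← hsub, hbijsum, Finset.sum_congr rfl (fun σ _ => hsign σ), hdet,
      Finset.sum_mul]
  have hdetval : M.det = f B₀ ^ r * f a := by
    apply mul_right_cancel₀ hB₀
    rw [← key2]
    ring
  have hli : LinearIndependent ℚ
      (fun j : Fin (r + 1) => fun i : Fin (r + 1) => f (Function.update B₀ i (a j)))
      ↔ IsUnit M.det :=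
    (Matrix.linearIndependent_rows_iff_isUnit (A := M)).trans (Matrix.isUnit_iff_isUnit_det M)
  rw [hli, isUnit_iff_ne_zero, hdetval]
  constructor
  · intro h
    exact mul_ne_zero (pow_ne_zero _ hB₀) h
  · intro h hfa
    exact h (by rw [hfa, mul_zero])
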